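/- Let M be a row-stochastic n×n matrix and u ⊊ {1,...,n}. If from every index i ∈ u there is a path i = i_0, i_1, ..., i_k with M_{i_{m} i_{m+1}} > 0 ending at some i_k ∉ u, then the substochastic matrix M_{uu} satisfies: M_{uu}^t → 0 as t → ∞. -/

import Mathlib

/-!
Write `A = M_{uu}`. Since `A ≥ 0` has row sums at most `1`, the row sums `A ^ t *ᵥ 1` are
nonincreasing in `t`. A row sum of `A` is `< 1` at the last state of `u` on a path leaving `u`,
and if `A i c > 0` and row `c` of `A ^ t` sums to less than `1`, so does row `i` of `A ^ (t + 1)`.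
Following the paths backwards, some power `A ^ T` has all row sums `< 1`, i.e. `‖A ^ T‖ < 1` in
the `ℓ∞` operator norm, and then `A ^ t → 0`.
-/

open Filter Topology Matrix

theorem tendsto_pow_atTop_nhds_zero_of_norm_pow_lt_one {R : Type*} [SeminormedRing R] {a : R}
    {T : ℕ} (hT : T ≠ 0) (ha : ‖a ^ T‖ < 1) :
    Tendsto (fun t : ℕ => a ^ t) atTop (𝓝 0) := by
  have hbdd : IsBoundedUnder (· ≤ ·) atTop (norm ∘ fun t : ℕ => a ^ (t % T)) := by
    refine isBoundedUnder_of ⟨(Finset.range T).sup' (by simpa [Nat.pos_iff_ne_zero]) (‖a ^ ·‖),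
      fun t => ?_⟩
    exact Finset.le_sup' (‖a ^ ·‖) (Finset.mem_range.2 (Nat.mod_lt t (Nat.pos_of_ne_zero hT)))
  refine (((tendsto_pow_atTop_nhds_zero_of_norm_lt_one ha).comp
    (Nat.tendsto_div_const_atTop hT)).zero_mul_isBoundedUnder_le hbdd).congr fun t => ?_
  simp only [Function.comp_apply, ← pow_mul, ← pow_add, Nat.div_add_mod]

namespace Matrix

attribute [local instance] Matrix.linftyOpNormedAddCommGroup Matrix.linftyOpNormedRing

theorem linfty_opNorm_lt_one_of_mulVec_one_lt_one {m n : Type*} [Fintype m] [Fintype n]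
    {B : Matrix m n ℝ} (hB : ∀ i j, 0 ≤ B i j) (h : ∀ i, (B *ᵥ 1) i < 1) : ‖B‖ < 1 := by
  rw [linfty_opNorm_def, NNReal.coe_lt_one, Finset.sup_lt_iff zero_lt_one]
  intro i _
  rw [← NNReal.coe_lt_one, NNReal.coe_sum]
  simpa [mulVec, dotProduct, Real.norm_of_nonneg (hB i _)] using h i

theorem tendsto_pow_atTop_nhds_zero_of_pow_mulVec_one_lt_one {ι : Type*} [Fintype ι]
    [DecidableEq ι] {A : Matrix ι ι ℝ} (hA : ∀ i j, 0 ≤ A i j) {T : ℕ} (hT : T ≠ 0)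
    (h : ∀ i, (A ^ T *ᵥ 1) i < 1) : Tendsto (fun t : ℕ => A ^ t) atTop (𝓝 0) :=
  tendsto_pow_atTop_nhds_zero_of_norm_pow_lt_one hT
    (linfty_opNorm_lt_one_of_mulVec_one_lt_one (pow_apply_nonneg hA T) h)

variable {ι : Type*} [Fintype ι] {A : Matrix ι ι ℝ}

theorem mulVec_mono_of_nonneg (hA : ∀ i j, 0 ≤ A i j) {v w : ι → ℝ} (h : v ≤ w) :
    A *ᵥ v ≤ A *ᵥ w := fun i =>
  Finset.sum_le_sum fun j _ => mul_le_mul_of_nonneg_left (h j) (hA i j)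

theorem mulVec_apply_lt_mulVec_apply_of_pos (hA : ∀ i j, 0 ≤ A i j) {v w : ι → ℝ} (h : v ≤ w)
    {i k : ι} (hik : 0 < A i k) (hk : v k < w k) : (A *ᵥ v) i < (A *ᵥ w) i :=
  Finset.sum_lt_sum (fun j _ => mul_le_mul_of_nonneg_left (h j) (hA i j))
    ⟨k, Finset.mem_univ k, mul_lt_mul_of_pos_left hk hik⟩

variable [DecidableEq ι]

theorem antitone_pow_mulVec_one (hA : ∀ i j, 0 ≤ A i j) (hsub : A *ᵥ 1 ≤ 1) :
    Antitone fun t : ℕ => A ^ t *ᵥ 1 :=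
  antitone_nat_of_succ_le fun t => by
    rw [pow_succ, ← mulVec_mulVec]
    exact mulVec_mono_of_nonneg (pow_apply_nonneg hA t) hsub

theorem exists_pow_mulVec_one_apply_lt_one (hA : ∀ i j, 0 ≤ A i j) (hsub : A *ᵥ 1 ≤ 1)
    {i k : ι} (hik : Relation.ReflTransGen (fun a b => 0 < A a b) i k) (hk : (A *ᵥ 1) k < 1) :
    ∃ t, (A ^ t *ᵥ 1) i < 1 := by
  induction hik using Relation.ReflTransGen.head_induction_on with
  | refl => exact ⟨1, by simpa using hk⟩
  | head hac _ ih =>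
    obtain ⟨t, ht⟩ := ih
    have hle : A ^ t *ᵥ 1 ≤ 1 := by simpa using antitone_pow_mulVec_one hA hsub (Nat.zero_le t)
    refine ⟨t + 1, ?_⟩
    rw [pow_succ', ← mulVec_mulVec]
    exact (mulVec_apply_lt_mulVec_apply_of_pos hA hle hac ht).trans_le (hsub _)

theorem exists_pow_mulVec_one_lt_one (hA : ∀ i j, 0 ≤ A i j) (hsub : A *ᵥ 1 ≤ 1)
    (hreach : ∀ i, ∃ k, Relation.ReflTransGen (fun a b => 0 < A a b) i k ∧ (A *ᵥ 1) k < 1) :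
    ∃ T ≠ 0, ∀ i, (A ^ T *ᵥ 1) i < 1 := by
  have hev : ∀ᶠ t in atTop, ∀ i, (A ^ t *ᵥ 1) i < 1 := eventually_all.2 fun i => by
    obtain ⟨k, hik, hk⟩ := hreach i
    obtain ⟨t, ht⟩ := exists_pow_mulVec_one_apply_lt_one hA hsub hik hk
    exact eventually_atTop.2 ⟨t, fun s hs => (antitone_pow_mulVec_one hA hsub hs i).trans_lt ht⟩
  obtain ⟨T, hT, hT0⟩ := (hev.and (eventually_ne_atTop 0)).exists
  exact ⟨T, hT0, hT⟩

section Submatrix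

variable {σ : Type*} {M : Matrix σ σ ℝ} (u : Finset σ)

theorem submatrix_val_mulVec_one_apply (i : u) :
    (M.submatrix ((↑) : u → σ) ((↑) : u → σ) *ᵥ 1) i = ∑ j ∈ u, M i j := by
  simp only [mulVec, dotProduct, submatrix_apply, Pi.one_apply, mul_one]
  exact Finset.sum_coe_sort u (M i)

variable [Fintype σ]

theorem submatrix_val_mulVec_one_le_one (hM : ∀ i j, 0 ≤ M i j) (hsub : ∀ i, ∑ j, M i j ≤ 1) :
    M.submatrix ((↑) : u → σ) ((↑) : u → σ) *ᵥ 1 ≤ 1 := fun i => by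
  rw [submatrix_val_mulVec_one_apply]
  exact (Finset.sum_le_univ_sum_of_nonneg (hM i)).trans (hsub i)

theorem submatrix_val_mulVec_one_apply_lt_one (hM : ∀ i j, 0 ≤ M i j)
    (hsub : ∀ i, ∑ j, M i j ≤ 1) {i : u} {j : σ} (hj : j ∉ u) (hij : 0 < M i j) :
    (M.submatrix ((↑) : u → σ) ((↑) : u → σ) *ᵥ 1) i < 1 := by
  rw [submatrix_val_mulVec_one_apply]
  exact (Finset.sum_lt_sum_of_subset (Finset.subset_univ u) (Finset.mem_univ j) hj hij
    fun k _ _ => hM i k).trans_le (hsub i)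

/-- The last state of `u` on a path leaving `u` leaks mass out of `M_{uu}`. -/
theorem exists_reflTransGen_submatrix_val_mulVec_one_lt_one (hM : ∀ i j, 0 ≤ M i j)
    (hsub : ∀ i, ∑ j, M i j ≤ 1) {i j : σ} (hij : Relation.ReflTransGen (fun a b => 0 < M a b) i j)
    (hj : j ∉ u) (hi : i ∈ u) :
    ∃ k : u,
      Relation.ReflTransGen (fun a b => 0 < M.submatrix ((↑) : u → σ) ((↑) : u → σ) a b) ⟨i, hi⟩ k ∧
      (M.submatrix ((↑) : u → σ) ((↑) : u → σ) *ᵥ 1) k < 1 := by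
  induction hij using Relation.ReflTransGen.head_induction_on with
  | refl => exact absurd hi hj
  | @head a c hac _ ih =>
    by_cases hc : c ∈ u
    · obtain ⟨k, hck, hk⟩ := ih hc
      exact ⟨k, .head (b := (⟨c, hc⟩ : u)) hac hck, hk⟩
    · exact ⟨⟨a, hi⟩, .refl, submatrix_val_mulVec_one_apply_lt_one u hM hsub hc hac⟩

end Submatrix

end Matrix

theorem substochastic_pow_tendsto_zero_general {n : ℕ} (M : Matrix (Fin n) (Fin n) ℝ)
    (hnonneg : ∀ i j, 0 ≤ M i j) (hrow : ∀ i, ∑ j, M i j = 1)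
    (u : Finset (Fin n))
    (hreach : ∀ i ∈ u, ∃ j, j ∉ u ∧ Relation.ReflTransGen (fun a b => 0 < M a b) i j) :
    Filter.Tendsto
      (fun t => (M.submatrix (fun i : {x // x ∈ u} => (i : Fin n))
        (fun j : {x // x ∈ u} => (j : Fin n))) ^ t)
      Filter.atTop (nhds 0) := by
  have hsub : ∀ i, ∑ j, M i j ≤ 1 := fun i => (hrow i).le
  have hA : ∀ i j, 0 ≤ M.submatrix ((↑) : u → Fin n) ((↑) : u → Fin n) i j :=
    fun i j => hnonneg i j
  obtain ⟨T, hT, hlt⟩ := exists_pow_mulVec_one_lt_one hA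
    (submatrix_val_mulVec_one_le_one u hnonneg hsub) fun i => by
      obtain ⟨j, hj, hij⟩ := hreach i i.2
      exact exists_reflTransGen_submatrix_val_mulVec_one_lt_one u hnonneg hsub hij hj i.2
  exact tendsto_pow_atTop_nhds_zero_of_pow_mulVec_one_lt_one hA hT hlt

/-- If from every unlabeled state there is a positive-probability path to a
labeled state, then powers of the substochastic submatrix M_{uu} tend to zero. -/
theorem substochastic_pow_tendsto_zero {n : ℕ} (M : Matrix (Fin n) (Fin n) ℝ)
    (hnonneg : ∀ i j, 0 ≤ M i j) (hrow : ∀ i, ∑ j, M i j = 1)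
    (u : Finset (Fin n)) (hu : u ≠ Finset.univ)
    (hreach : ∀ i ∈ u, ∃ j, j ∉ u ∧ Relation.ReflTransGen (fun a b => 0 < M a b) i j) :
    Filter.Tendsto
      (fun t => (M.submatrix (fun i : {x // x ∈ u} => (i : Fin n))
        (fun j : {x // x ∈ u} => (j : Fin n))) ^ t)
      Filter.atTop (nhds 0) :=
  substochastic_pow_tendsto_zero_general M hnonneg hrow u hreach
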